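/- Let γ ∈ (−2,0], m ≥ 12, and let κ : ℝ³ → ℝ be measurable with 0 ≤ κ(x) ≤ κ₂ for all x. Let f : ℝ³×ℝ³ → [0,∞) be measurable with f(y,w) ≤ M for almost every (y,w) and ∫_{ℝ⁶} ( ⟨y⟩^{m} + ⟨w⟩^{m} ) f(y,w) dy dw ≤ M, for some M < ∞. Then there exists a constant C > 0, depending only on γ, m, κ₂ and M, such that for all (x,v) ∈ ℝ³×ℝ³: ∫_{ℝ⁶} κ(x−y) |v−w|^{γ+1} f(y,w) dy dw ≤ C ⟨v⟩^{γ+1} and ∫_{ℝ⁶} κ(x−y) |v−w|^{γ} f(y,w) dy dw ≤ C ⟨v⟩^{γ}. -/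

import Mathlib

/-!
For `0 ≤ α ≤ 1` the kernel is controlled by `|v - w|^α ≤ ⟨v⟩^α ⟨w⟩^α` and the moment bound closes
the estimate. For `-2 < α < 0` the singular region `|v - w| < δ := (⟨v⟩² ⟨y⟩³)⁻¹` is handled with
`f ≤ M`: by scaling, `∫_{|u|<δ} |u|^α du = δ^(3+α) ∫_{|u|<1} |u|^α du`, and
`δ^(3+α) ≤ ⟨v⟩^α ⟨y⟩^(-(9+3α))` is integrable in `y`. Off that region, either
`|v - w| ≥ ⟨v⟩/2`, where `|v - w|^α ≤ 4 ⟨v⟩^α`, or `⟨v⟩ ≤ 4⟨w⟩` and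
`|v - w|^α ≤ δ^(-2) = ⟨v⟩⁴⟨y⟩⁶ ≤ 4⁶ ⟨v⟩^α ⟨y⟩⁶⟨w⟩⁶`, which the moments of order `m ≥ 12` absorb.
-/

open MeasureTheory Real

noncomputable section

abbrev E3 : Type := EuclideanSpace ℝ (Fin 3)

/-- `⟨y⟩ = √(1+|y|²)`. -/
def jap (x : E3) : ℝ := Real.sqrt (1 + ‖x‖ ^ 2)

open scoped ENNReal

section BallIntegral

variable {E : Type*} [NormedAddCommGroup E] [NormedSpace ℝ E] [FiniteDimensional ℝ E]
  [MeasurableSpace E] [BorelSpace E] (μ : Measure E) [μ.IsAddHaarMeasure]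

theorem setLIntegral_ball_rpow_norm (α : ℝ) {δ : ℝ} (hδ : 0 < δ) :
    ∫⁻ u in Metric.ball 0 δ, ENNReal.ofReal (‖u‖ ^ α) ∂μ =
      ENNReal.ofReal (δ ^ (Module.finrank ℝ E + α)) *
        ∫⁻ u in Metric.ball 0 1, ENNReal.ofReal (‖u‖ ^ α) ∂μ := by
  set g := (Metric.ball (0 : E) δ).indicator fun u => ENNReal.ofReal (‖u‖ ^ α)
  have hg : Measurable g := Measurable.indicator (by fun_prop) measurableSet_ball
  have hscale (u : E) : g (δ • u) = ENNReal.ofReal (δ ^ α) *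
      (Metric.ball (0 : E) 1).indicator (fun u => ENNReal.ofReal (‖u‖ ^ α)) u := by
    simp only [g, Set.indicator, mem_ball_zero_iff, norm_smul, norm_of_nonneg hδ.le,
      mul_lt_iff_lt_one_right hδ]
    split_ifs
    · rw [mul_rpow hδ.le (norm_nonneg u), ENNReal.ofReal_mul (rpow_nonneg hδ.le α)]
    · rw [mul_zero]
  have hmap := congrArg (fun ν => ∫⁻ u, g u ∂ν) (Measure.map_addHaar_smul μ hδ.ne')
  simp only [lintegral_map hg (measurable_const_smul δ), hscale, lintegral_smul_measure,
    lintegral_const_mul' _ _ ENNReal.ofReal_ne_top, lintegral_indicator measurableSet_ball] at hmap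
  rw [abs_of_pos (by positivity), smul_eq_mul] at hmap
  have hpow : (0 : ℝ) < δ ^ Module.finrank ℝ E := by positivity
  rw [← lintegral_indicator measurableSet_ball]
  calc ∫⁻ u, g u ∂μ
      = ENNReal.ofReal (δ ^ Module.finrank ℝ E) * ENNReal.ofReal (δ ^ Module.finrank ℝ E)⁻¹ *
          ∫⁻ u, g u ∂μ := by
        rw [← ENNReal.ofReal_mul hpow.le, mul_inv_cancel₀ hpow.ne', ENNReal.ofReal_one, one_mul]
    _ = _ := by
        rw [mul_assoc, ← hmap, ← mul_assoc, ← ENNReal.ofReal_mul hpow.le, rpow_add hδ,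
          rpow_natCast]

theorem setLIntegral_ball_one_rpow_norm_lt_top [Nontrivial E] {α : ℝ}
    (hα : -(Module.finrank ℝ E : ℝ) < α) :
    ∫⁻ u in Metric.ball 0 1, ENNReal.ofReal (‖u‖ ^ α) ∂μ < ∞ := by
  refine Integrable.lintegral_lt_top ((integrableOn_fun_norm_addHaar μ (f := fun t => t ^ α)).2 ?_)
  have hpow : Set.EqOn (fun t : ℝ => t ^ (Module.finrank ℝ E - 1) • t ^ α)
      (fun t => t ^ ((Module.finrank ℝ E : ℝ) - 1 + α)) (Set.Ioo 0 1) := by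
    intro t ht
    dsimp only
    rw [smul_eq_mul, rpow_add ht.1, ← rpow_natCast, Nat.cast_sub Module.finrank_pos, Nat.cast_one]
  rw [integrableOn_congr_fun hpow measurableSet_Ioo,
    intervalIntegral.integrableOn_Ioo_rpow_iff one_pos]
  linarith

end BallIntegral

lemma jap_sq (x : E3) : jap x ^ 2 = 1 + ‖x‖ ^ 2 := sq_sqrt (by positivity)

lemma one_le_jap (x : E3) : 1 ≤ jap x := one_le_sqrt.2 (by simp)

lemma jap_pos (x : E3) : 0 < jap x := one_pos.trans_le (one_le_jap x)

lemma norm_le_jap (x : E3) : ‖x‖ ≤ jap x := le_sqrt_of_sq_le (by linarith)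

@[fun_prop]
lemma continuous_jap : Continuous jap := by unfold jap; fun_prop

lemma norm_sub_le_jap_mul (v w : E3) : ‖v - w‖ ≤ jap v * jap w := by
  refine (norm_sub_le v w).trans (le_of_sq_le_sq ?_ (mul_pos (jap_pos v) (jap_pos w)).le)
  rw [mul_pow, jap_sq, jap_sq]
  nlinarith [sq_nonneg (‖v‖ * ‖w‖ - 1), norm_nonneg v, norm_nonneg w]

lemma jap_le_four_mul_jap_of_norm_sub_lt {v w : E3} (h : ‖v - w‖ < jap v / 2) :
    jap v ≤ 4 * jap w := by
  have hv : jap v ≤ 1 + ‖v‖ := sqrt_one_add_norm_sq_le v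
  have hvw : ‖v‖ ≤ ‖v - w‖ + ‖w‖ := norm_le_norm_sub_add v w
  linarith [one_le_jap w, norm_le_jap w]

lemma lintegral_jap_rpow_neg_lt_top {s : ℝ} (hs : 3 < s) :
    ∫⁻ y : E3, ENNReal.ofReal (jap y ^ (-s)) < ∞ := by
  have h (y : E3) : jap y ^ (-s) = (1 + ‖y‖ ^ 2) ^ (-s / 2) := by
    rw [jap, sqrt_eq_rpow, ← rpow_mul (by positivity)]
    ring_nf
  simp_rw [h]
  exact (integrable_rpow_neg_one_add_norm_sq (by simpa using hs)).lintegral_lt_top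

def momentWeight (m : ℝ) (p : E3 × E3) : ℝ := jap p.1 ^ m + jap p.2 ^ m

lemma momentWeight_nonneg (m : ℝ) (p : E3 × E3) : 0 ≤ momentWeight m p :=
  add_nonneg (rpow_nonneg (jap_pos _).le m) (rpow_nonneg (jap_pos _).le m)

lemma one_le_momentWeight {m : ℝ} (hm : 0 ≤ m) (p : E3 × E3) : 1 ≤ momentWeight m p := by
  unfold momentWeight
  linarith [one_le_rpow (one_le_jap p.1) hm, rpow_nonneg (jap_pos p.2).le m]

lemma jap_rpow_le_momentWeight {a m : ℝ} (ham : a ≤ m) (p : E3 × E3) :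
    jap p.2 ^ a ≤ momentWeight m p := by
  unfold momentWeight
  linarith [rpow_le_rpow_of_exponent_le (one_le_jap p.2) ham, rpow_nonneg (jap_pos p.1).le m]

lemma jap_pow_six_mul_le_momentWeight {m : ℝ} (hm : 12 ≤ m) (p : E3 × E3) :
    jap p.1 ^ 6 * jap p.2 ^ 6 ≤ momentWeight m p := by
  have h12 (z : E3) : jap z ^ 12 ≤ jap z ^ m := by
    rw [← rpow_natCast]
    exact rpow_le_rpow_of_exponent_le (one_le_jap z) (by norm_num [hm])
  have h6 (z : E3) : 0 ≤ jap z ^ 6 := by positivity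
  unfold momentWeight
  nlinarith [sq_nonneg (jap p.1 ^ 6 - jap p.2 ^ 6), h12 p.1, h12 p.2, mul_nonneg (h6 p.1) (h6 p.2)]

def nearRadius (v y : E3) : ℝ := (jap v ^ 2 * jap y ^ 3)⁻¹

lemma nearRadius_pos (v y : E3) : 0 < nearRadius v y := by
  have := jap_pos v; have := jap_pos y
  unfold nearRadius; positivity

lemma nearRadius_le_one (v y : E3) : nearRadius v y ≤ 1 :=
  inv_le_one_of_one_le₀ (one_le_mul_of_one_le_of_one_le (one_le_pow₀ (one_le_jap v))
    (one_le_pow₀ (one_le_jap y)))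

lemma rpow_norm_sub_le_of_nearRadius_le {α m : ℝ} (hα : -2 ≤ α) (hα0 : α ≤ 0) (hm : 12 ≤ m)
    {v y w : E3} (h : nearRadius v y ≤ ‖v - w‖) :
    ‖v - w‖ ^ α ≤ 4 ^ 6 * jap v ^ α * momentWeight m (y, w) := by
  have hv := jap_pos v
  have hvα : 0 ≤ jap v ^ α := rpow_nonneg hv.le α
  rcases le_or_gt (jap v / 2) ‖v - w‖ with hfar | hmid
  · have h2 : (2 : ℝ) ^ (-α) ≤ 4 := by
      calc (2 : ℝ) ^ (-α) ≤ 2 ^ (2 : ℝ) := rpow_le_rpow_of_exponent_le one_le_two (by linarith)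
        _ = 4 := by norm_num
    have hW := one_le_momentWeight (by linarith : (0 : ℝ) ≤ m) (y, w)
    calc ‖v - w‖ ^ α ≤ (jap v / 2) ^ α := rpow_le_rpow_of_nonpos (by positivity) hfar hα0
      _ = jap v ^ α * 2 ^ (-α) := by
        rw [div_rpow hv.le zero_le_two, rpow_neg zero_le_two, div_eq_mul_inv]
      _ ≤ jap v ^ α * 4 := by gcongr
      _ ≤ 4 ^ 6 * jap v ^ α * momentWeight m (y, w) := by nlinarith
  · have hδ := nearRadius_pos v y
    calc ‖v - w‖ ^ α ≤ nearRadius v y ^ α := rpow_le_rpow_of_nonpos hδ h hα0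
      _ ≤ nearRadius v y ^ (-2 : ℝ) := rpow_le_rpow_of_exponent_ge hδ (nearRadius_le_one v y) hα
      _ = jap v ^ (-2 : ℝ) * jap v ^ 6 * jap y ^ 6 := by
        rw [nearRadius, rpow_neg (by positivity), rpow_neg hv.le, rpow_two, rpow_two]
        field_simp
      _ ≤ jap v ^ α * (4 * jap w) ^ 6 * jap y ^ 6 := by
        have hvα' : jap v ^ (-2 : ℝ) ≤ jap v ^ α := rpow_le_rpow_of_exponent_le (one_le_jap v) hα
        have hvw : jap v ≤ 4 * jap w := jap_le_four_mul_jap_of_norm_sub_lt hmid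
        gcongr
      _ = 4 ^ 6 * jap v ^ α * (jap y ^ 6 * jap w ^ 6) := by ring
      _ ≤ 4 ^ 6 * jap v ^ α * momentWeight m (y, w) := by
        gcongr
        exact jap_pow_six_mul_le_momentWeight hm (y, w)

lemma nearRadius_rpow_le {α : ℝ} (hα : -2 ≤ α) (v y : E3) :
    nearRadius v y ^ (3 + α) ≤ jap v ^ α * jap y ^ (-(9 + 3 * α)) := by
  have hv : (jap v ^ 2) ^ (-(3 + α)) ≤ jap v ^ α := by
    rw [← rpow_natCast, ← rpow_mul (jap_pos v).le]
    exact rpow_le_rpow_of_exponent_le (one_le_jap v) (by push_cast; linarith)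
  have hy : (jap y ^ 3) ^ (-(3 + α)) = jap y ^ (-(9 + 3 * α)) := by
    rw [← rpow_natCast, ← rpow_mul (jap_pos y).le]
    ring_nf
  have := jap_pos v; have := jap_pos y
  rw [nearRadius, inv_rpow (by positivity), ← rpow_neg (by positivity),
    mul_rpow (by positivity) (by positivity), hy]
  exact mul_le_mul_of_nonneg_right hv (by positivity)

def nearPart (α : ℝ) (v : E3) : E3 × E3 → ℝ≥0∞ :=
  {p | ‖v - p.2‖ < nearRadius v p.1}.indicator fun p => ENNReal.ofReal (‖v - p.2‖ ^ α)

lemma measurable_nearPart (α : ℝ) (v : E3) : Measurable (nearPart α v) := by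
  have hδ : Measurable (nearRadius v) := by unfold nearRadius; fun_prop
  exact Measurable.indicator (by fun_prop) (measurableSet_lt (by fun_prop) (by fun_prop))

lemma lintegral_nearPart_le {α : ℝ} (hα : -2 ≤ α) (v : E3) :
    ∫⁻ p, nearPart α v p ≤
      (∫⁻ u in Metric.ball (0 : E3) 1, ENNReal.ofReal (‖u‖ ^ α)) *
        (∫⁻ y : E3, ENNReal.ofReal (jap y ^ (-(9 + 3 * α)))) * ENNReal.ofReal (jap v ^ α) := by
  set K := ∫⁻ u in Metric.ball (0 : E3) 1, ENNReal.ofReal (‖u‖ ^ α)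
  have hslice (y : E3) :
      ∫⁻ w, nearPart α v (y, w) = ENNReal.ofReal (nearRadius v y ^ (3 + α)) * K := by
    have hball : (fun w => nearPart α v (y, w)) = fun w =>
        (Metric.ball (0 : E3) (nearRadius v y)).indicator (fun u => ENNReal.ofReal (‖u‖ ^ α))
          (v - w) := by
      ext w
      simp [nearPart, Set.indicator]
    rw [hball, lintegral_sub_left_eq_self, lintegral_indicator measurableSet_ball,
      setLIntegral_ball_rpow_norm volume α (nearRadius_pos v y), finrank_euclideanSpace_fin,
      Nat.cast_ofNat]
  calc ∫⁻ p, nearPart α v p ≤ ∫⁻ y, ∫⁻ w, nearPart α v (y, w) := by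
        rw [Measure.volume_eq_prod]
        exact lintegral_prod_le _
    _ = ∫⁻ y, ENNReal.ofReal (nearRadius v y ^ (3 + α)) * K := by simp_rw [hslice]
    _ ≤ ∫⁻ y, ENNReal.ofReal (jap v ^ α) * ENNReal.ofReal (jap y ^ (-(9 + 3 * α))) * K := by
        gcongr with y
        rw [← ENNReal.ofReal_mul (rpow_nonneg (jap_pos v).le α)]
        exact ENNReal.ofReal_le_ofReal (nearRadius_rpow_le hα v y)
    _ = _ := by
        simp_rw [mul_assoc]
        rw [lintegral_const_mul' _ _ ENNReal.ofReal_ne_top, lintegral_mul_const _ (by fun_prop)]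
        ring

def potential (κ : E3 → ℝ) (f : E3 × E3 → ℝ) (α : ℝ) (x v : E3) : ℝ≥0∞ :=
  ∫⁻ p : E3 × E3, ENNReal.ofReal (κ (x - p.1) * ‖v - p.2‖ ^ α * f p)

lemma ofReal_mul_le_ofReal_mul_ofReal_mul {a b c : ℝ} (ha : 0 ≤ a) (hb : 0 ≤ b) (h : a ≤ c * b)
    (t : ℝ) : ENNReal.ofReal (a * t) ≤ ENNReal.ofReal c * ENNReal.ofReal (b * t) := by
  rw [ENNReal.ofReal_mul ha, ENNReal.ofReal_mul hb, ← mul_assoc, ← ENNReal.ofReal_mul' hb]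
  gcongr

theorem potential_le_of_nonneg {α m κ₂ M : ℝ} (hα : 0 ≤ α) (hαm : α ≤ m) {κ : E3 → ℝ}
    (hκ : ∀ x : E3, 0 ≤ κ x ∧ κ x ≤ κ₂) {f : E3 × E3 → ℝ}
    (hmom : ∫⁻ p, ENNReal.ofReal (momentWeight m p * f p) ≤ ENNReal.ofReal M) (x v : E3) :
    potential κ f α x v ≤ ENNReal.ofReal κ₂ * ENNReal.ofReal M * ENNReal.ofReal (jap v ^ α) := by
  have hκ₂ : 0 ≤ κ₂ := (hκ 0).1.trans (hκ 0).2
  have hkernel (p : E3 × E3) :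
      κ (x - p.1) * ‖v - p.2‖ ^ α ≤ κ₂ * jap v ^ α * momentWeight m p := by
    have hr : ‖v - p.2‖ ^ α ≤ jap v ^ α * momentWeight m p := by
      calc ‖v - p.2‖ ^ α ≤ (jap v * jap p.2) ^ α :=
            rpow_le_rpow (norm_nonneg _) (norm_sub_le_jap_mul v p.2) hα
        _ = jap v ^ α * jap p.2 ^ α := mul_rpow (jap_pos v).le (jap_pos p.2).le
        _ ≤ jap v ^ α * momentWeight m p :=
          mul_le_mul_of_nonneg_left (jap_rpow_le_momentWeight hαm p) (rpow_nonneg (jap_pos v).le α)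
    calc κ (x - p.1) * ‖v - p.2‖ ^ α ≤ κ₂ * (jap v ^ α * momentWeight m p) :=
          mul_le_mul (hκ _).2 hr (rpow_nonneg (norm_nonneg _) α) hκ₂
      _ = κ₂ * jap v ^ α * momentWeight m p := by ring
  calc potential κ f α x v
      ≤ ∫⁻ p, ENNReal.ofReal (κ₂ * jap v ^ α) * ENNReal.ofReal (momentWeight m p * f p) :=
        lintegral_mono fun p => ofReal_mul_le_ofReal_mul_ofReal_mul
          (mul_nonneg (hκ _).1 (rpow_nonneg (norm_nonneg _) α)) (momentWeight_nonneg m p)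
          (hkernel p) (f p)
    _ ≤ ENNReal.ofReal (κ₂ * jap v ^ α) * ENNReal.ofReal M := by
        rw [lintegral_const_mul' _ _ ENNReal.ofReal_ne_top]
        gcongr
    _ = ENNReal.ofReal κ₂ * ENNReal.ofReal M * ENNReal.ofReal (jap v ^ α) := by
        rw [ENNReal.ofReal_mul hκ₂]
        ring

lemma ofReal_integrand_le_far_add_near {α m κ₂ M : ℝ} (hα : -2 ≤ α) (hα0 : α ≤ 0) (hm : 12 ≤ m)
    {k t : ℝ} (hk : 0 ≤ k ∧ k ≤ κ₂) (ht : t ≤ M) (v : E3) (p : E3 × E3) :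
    ENNReal.ofReal (k * ‖v - p.2‖ ^ α * t) ≤
      ENNReal.ofReal (κ₂ * 4 ^ 6) * ENNReal.ofReal (jap v ^ α) *
          ENNReal.ofReal (momentWeight m p * t) +
        ENNReal.ofReal κ₂ * ENNReal.ofReal M * nearPart α v p := by
  have hkr : 0 ≤ k * ‖v - p.2‖ ^ α := mul_nonneg hk.1 (rpow_nonneg (norm_nonneg _) α)
  by_cases hnear : ‖v - p.2‖ < nearRadius v p.1
  · refine le_add_left ?_
    have hind : nearPart α v p = ENNReal.ofReal (‖v - p.2‖ ^ α) := by simp [nearPart, hnear]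
    rw [hind, ENNReal.ofReal_mul hkr, ENNReal.ofReal_mul hk.1, mul_right_comm _ (ENNReal.ofReal M)]
    gcongr
    exact hk.2
  · refine le_add_right ?_
    rw [← ENNReal.ofReal_mul (mul_nonneg (hk.1.trans hk.2) (by norm_num))]
    refine ofReal_mul_le_ofReal_mul_ofReal_mul hkr (momentWeight_nonneg m p) ?_ t
    have hr := rpow_norm_sub_le_of_nearRadius_le hα hα0 hm (not_lt.1 hnear)
    calc k * ‖v - p.2‖ ^ α ≤ κ₂ * (4 ^ 6 * jap v ^ α * momentWeight m (p.1, p.2)) :=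
          mul_le_mul hk.2 hr (rpow_nonneg (norm_nonneg _) α) (hk.1.trans hk.2)
      _ = κ₂ * 4 ^ 6 * jap v ^ α * momentWeight m p := by ring

theorem exists_potential_le_of_neg {α m κ₂ M : ℝ} (hα : -2 < α) (hα0 : α < 0) (hm : 12 ≤ m)
    {κ : E3 → ℝ} (hκ : ∀ x : E3, 0 ≤ κ x ∧ κ x ≤ κ₂) {f : E3 × E3 → ℝ}
    (hf_bdd : ∀ᵐ p : E3 × E3, f p ≤ M)
    (hmom : ∫⁻ p, ENNReal.ofReal (momentWeight m p * f p) ≤ ENNReal.ofReal M) :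
    ∃ C : ℝ≥0∞, C ≠ ∞ ∧ ∀ x v : E3, potential κ f α x v ≤ C * ENNReal.ofReal (jap v ^ α) := by
  set K := ∫⁻ u in Metric.ball (0 : E3) 1, ENNReal.ofReal (‖u‖ ^ α)
  set J := ∫⁻ y : E3, ENNReal.ofReal (jap y ^ (-(9 + 3 * α)))
  have hK : K ≠ ∞ :=
    (setLIntegral_ball_one_rpow_norm_lt_top volume (by simp; linarith)).ne
  have hJ : J ≠ ∞ := (lintegral_jap_rpow_neg_lt_top (by linarith)).ne
  refine ⟨ENNReal.ofReal (κ₂ * 4 ^ 6) * ENNReal.ofReal M +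
    ENNReal.ofReal κ₂ * ENNReal.ofReal M * (K * J), by finiteness, fun x v => ?_⟩
  calc potential κ f α x v
      ≤ ∫⁻ p, (ENNReal.ofReal (κ₂ * 4 ^ 6) * ENNReal.ofReal (jap v ^ α) *
            ENNReal.ofReal (momentWeight m p * f p) +
          ENNReal.ofReal κ₂ * ENNReal.ofReal M * nearPart α v p) :=
        lintegral_mono_ae (hf_bdd.mono fun p hp =>
          ofReal_integrand_le_far_add_near hα.le hα0.le hm (hκ _) hp v p)
    _ = ENNReal.ofReal (κ₂ * 4 ^ 6) * ENNReal.ofReal (jap v ^ α) *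
            (∫⁻ p, ENNReal.ofReal (momentWeight m p * f p)) +
          ENNReal.ofReal κ₂ * ENNReal.ofReal M * ∫⁻ p, nearPart α v p := by
        rw [lintegral_add_right _ ((measurable_nearPart α v).const_mul _),
          lintegral_const_mul' _ _ (by finiteness), lintegral_const_mul' _ _ (by finiteness)]
    _ ≤ ENNReal.ofReal (κ₂ * 4 ^ 6) * ENNReal.ofReal (jap v ^ α) * ENNReal.ofReal M +
          ENNReal.ofReal κ₂ * ENNReal.ofReal M * (K * J * ENNReal.ofReal (jap v ^ α)) := by
        gcongr
        exact lintegral_nearPart_le hα.le v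
    _ = _ := by ring

theorem exists_potential_le {α m κ₂ M : ℝ} (hα : -2 < α) (hα1 : α ≤ 1) (hm : 12 ≤ m)
    {κ : E3 → ℝ} (hκ : ∀ x : E3, 0 ≤ κ x ∧ κ x ≤ κ₂) {f : E3 × E3 → ℝ}
    (hf_bdd : ∀ᵐ p : E3 × E3, f p ≤ M)
    (hmom : ∫⁻ p, ENNReal.ofReal (momentWeight m p * f p) ≤ ENNReal.ofReal M) :
    ∃ C : ℝ≥0∞, C ≠ ∞ ∧ ∀ x v : E3, potential κ f α x v ≤ C * ENNReal.ofReal (jap v ^ α) := by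
  rcases lt_or_ge α 0 with hneg | hnonneg
  · exact exists_potential_le_of_neg hα hneg hm hκ hf_bdd hmom
  · exact ⟨_, by finiteness, potential_le_of_nonneg hnonneg (by linarith) hκ hmom⟩

lemma mul_ofReal_le_ofReal_mul {C : ℝ≥0∞} (hC : C ≠ ∞) {D t : ℝ} (hCD : C.toReal ≤ D)
    (ht : 0 ≤ t) : C * ENNReal.ofReal t ≤ ENNReal.ofReal (D * t) := by
  rw [← ENNReal.ofReal_toReal hC, ← ENNReal.ofReal_mul ENNReal.toReal_nonneg]
  exact ENNReal.ofReal_le_ofReal (mul_le_mul_of_nonneg_right hCD ht)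

theorem statement19_general (γ m κ₂ M : ℝ) (hγ : γ ∈ Set.Ioc (-2 : ℝ) 0) (hm : 12 ≤ m)
    (κ : E3 → ℝ) (hκ : ∀ x : E3, 0 ≤ κ x ∧ κ x ≤ κ₂)
    (f : E3 × E3 → ℝ) (hf_bdd : ∀ᵐ p : E3 × E3, f p ≤ M)
    (hmom : ∫⁻ p : E3 × E3, ENNReal.ofReal ((jap p.1 ^ m + jap p.2 ^ m) * f p) ≤
      ENNReal.ofReal M) :
    ∃ C : ℝ, 0 < C ∧ ∀ x v : E3,
      (∫⁻ p : E3 × E3, ENNReal.ofReal (κ (x - p.1) * ‖v - p.2‖ ^ (γ + 1) * f p)) ≤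
          ENNReal.ofReal (C * jap v ^ (γ + 1)) ∧
      (∫⁻ p : E3 × E3, ENNReal.ofReal (κ (x - p.1) * ‖v - p.2‖ ^ γ * f p)) ≤
          ENNReal.ofReal (C * jap v ^ γ) := by
  obtain ⟨hγ₁, hγ₂⟩ := hγ
  obtain ⟨C₁, hC₁, h₁⟩ :=
    exists_potential_le (α := γ + 1) (by linarith) (by linarith) hm hκ hf_bdd hmom
  obtain ⟨C₂, hC₂, h₂⟩ :=
    exists_potential_le (α := γ) (by linarith) (by linarith) hm hκ hf_bdd hmom
  refine ⟨C₁.toReal + C₂.toReal + 1, by positivity, fun x v => ⟨?_, ?_⟩⟩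
  · refine (h₁ x v).trans (mul_ofReal_le_ofReal_mul hC₁ ?_ (rpow_nonneg (jap_pos v).le _))
    linarith [ENNReal.toReal_nonneg (a := C₂)]
  · refine (h₂ x v).trans (mul_ofReal_le_ofReal_mul hC₂ ?_ (rpow_nonneg (jap_pos v).le _))
    linarith [ENNReal.toReal_nonneg (a := C₁)]

/-- If `0 ≤ κ ≤ κ₂`, `0 ≤ f ≤ M` a.e. and
`∫ (⟨y⟩^m + ⟨w⟩^m) f ≤ M` with `m ≥ 12`, then for `γ ∈ (-2,0]`:
`∫ κ(x-y) |v-w|^{γ+1} f dy dw ≤ C ⟨v⟩^{γ+1}` and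
`∫ κ(x-y) |v-w|^{γ} f dy dw ≤ C ⟨v⟩^{γ}` (stated with extended-real valued lower
integrals). -/
theorem statement19 (γ m κ₂ M : ℝ) (hγ : γ ∈ Set.Ioc (-2 : ℝ) 0) (hm : 12 ≤ m)
    (κ : E3 → ℝ) (hκ_meas : Measurable κ) (hκ : ∀ x : E3, 0 ≤ κ x ∧ κ x ≤ κ₂)
    (f : E3 × E3 → ℝ) (hf_meas : Measurable f) (hf_nonneg : ∀ p, 0 ≤ f p)
    (hf_bdd : ∀ᵐ p : E3 × E3, f p ≤ M)
    (hmom : ∫⁻ p : E3 × E3, ENNReal.ofReal ((jap p.1 ^ m + jap p.2 ^ m) * f p) ≤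
      ENNReal.ofReal M) :
    ∃ C : ℝ, 0 < C ∧ ∀ x v : E3,
      (∫⁻ p : E3 × E3, ENNReal.ofReal (κ (x - p.1) * ‖v - p.2‖ ^ (γ + 1) * f p)) ≤
          ENNReal.ofReal (C * jap v ^ (γ + 1)) ∧
      (∫⁻ p : E3 × E3, ENNReal.ofReal (κ (x - p.1) * ‖v - p.2‖ ^ γ * f p)) ≤
          ENNReal.ofReal (C * jap v ^ γ) :=
  statement19_general γ m κ₂ M hγ hm κ hκ f hf_bdd hmom
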